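/- arXiv:2001.08446 — 8 statements merged into one kernel-verified Lean document; each statement's English description precedes it below -/
import Mathlib

section
/- For every integer i ≥ 2, the double factorial satisfies the summation formula (2i−1)!! = Σ_{k=1}^{i} C(i,k) · (2k−3)!! · (2(i−k)−1)!!, where C(i,k) = i!/(k!(i−k)!) is the binomial coefficient. -/
/-!
Write `a n = (2n-1)‼`, so that `a (n+1) = (2n+1) * a n` and the summand is `C(i,k) a(k-1) a(i-k)`.
The binomial convolution `∑ C(n,k) a k a (n-k)` is `(2n)‼`: applying the recurrence to either factor
and Pascal's rule shows that it gets multiplied by `(2k+1) + (2(n-k)+1) = 2n+2`. Splitting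
`C(n+2,k+1)` by Pascal's rule into this convolution and a shifted sum then shows that the
right-hand side `∑ C(n+1,k+1) a k a (n-k)` gets multiplied by `2n+3`, as `(2n+1)‼` does.
-/

open Finset Nat

theorem doubleFactorial_two_mul_add_one_sub_one (k : ℕ) :
    (2 * (k + 1) - 1)‼ = (2 * k + 1) * (2 * k - 1)‼ := by
  rw [show 2 * (k + 1) - 1 = 2 * k + 1 by omega, doubleFactorial_add_one]

theorem sum_antidiagonal_choose_mul_doubleFactorial_two_mul_sub_one (n : ℕ) :
    ∑ p ∈ antidiagonal n, n.choose p.1 * ((2 * p.1 - 1)‼ * (2 * p.2 - 1)‼) = (2 * n)‼ := by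
  induction n with
  | zero => rfl
  | succ n ih =>
    have hsplit :=
      sum_antidiagonal_choose_succ_mul (R := ℕ) (fun i j => (2 * i - 1)‼ * (2 * j - 1)‼) n
    simp only [Nat.cast_id] at hsplit
    rw [hsplit, ← sum_add_distrib, show 2 * (n + 1) = 2 * n + 2 by ring, doubleFactorial_add_two,
      ← ih, mul_sum]
    refine sum_congr rfl fun p hp => ?_
    rw [HasAntidiagonal.mem_antidiagonal] at hp
    rw [choose_symm_of_eq_add hp.symm, doubleFactorial_two_mul_add_one_sub_one,
      doubleFactorial_two_mul_add_one_sub_one,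
      show 2 * n + 2 = (2 * p.2 + 1) + (2 * p.1 + 1) by omega]
    ring

theorem sum_antidiagonal_succ_choose_mul_doubleFactorial_two_mul_sub_one (n : ℕ) :
    ∑ p ∈ antidiagonal n, (n + 1).choose (p.1 + 1) * ((2 * p.1 - 1)‼ * (2 * p.2 - 1)‼) =
      (2 * n + 1)‼ := by
  induction n with
  | zero => rfl
  | succ n ih =>
    have hpascal : ∑ p ∈ antidiagonal (n + 1),
        (n + 2).choose (p.1 + 1) * ((2 * p.1 - 1)‼ * (2 * p.2 - 1)‼) =
        (2 * (n + 1))‼ + ∑ p ∈ antidiagonal n,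
          (n + 1).choose (p.1 + 1) * ((2 * p.1 - 1)‼ * (2 * (p.2 + 1) - 1)‼) := by
      simp only [choose_succ_succ' (n + 1), add_mul, sum_add_distrib,
        sum_antidiagonal_choose_mul_doubleFactorial_two_mul_sub_one]
      rw [sum_antidiagonal_succ', choose_succ_self, zero_mul, zero_add]
    have hT : (2 * (n + 1))‼ = ∑ p ∈ antidiagonal n,
        2 * (p.1 + 1) * ((n + 1).choose (p.1 + 1) * ((2 * p.1 - 1)‼ * (2 * p.2 - 1)‼)) := by
      rw [show 2 * (n + 1) = 2 * n + 2 by ring, doubleFactorial_add_two,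
        ← sum_antidiagonal_choose_mul_doubleFactorial_two_mul_sub_one, mul_sum]
      refine sum_congr rfl fun p _ => ?_
      rw [show 2 * n + 2 = 2 * (n + 1) by ring, mul_assoc, ← mul_assoc (n + 1),
        add_one_mul_choose_eq]
      ring
    rw [hpascal, hT, ← sum_add_distrib, show 2 * (n + 1) + 1 = 2 * n + 1 + 2 by ring,
      doubleFactorial_add_two, ← ih, mul_sum]
    refine sum_congr rfl fun p hp => ?_
    rw [HasAntidiagonal.mem_antidiagonal] at hp
    rw [doubleFactorial_two_mul_add_one_sub_one,
      show 2 * n + 1 + 2 = 2 * (p.1 + 1) + (2 * p.2 + 1) by omega]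
    ring

/-- Double factorial summation formula: for every integer `i ≥ 2`,
`(2i−1)!! = Σ_{k=1}^{i} C(i,k) · (2k−3)!! · (2(i−k)−1)!!`,
with natural-number subtraction truncating negative arguments to `0` and `0‼ = 1`,
matching the convention `(−1)!! = 1`. -/
theorem double_factorial_summation (i : ℕ) (hi : 2 ≤ i) :
    (2 * i - 1)‼ =
      ∑ k ∈ Finset.Icc 1 i, i.choose k * (2 * k - 3)‼ * (2 * (i - k) - 1)‼ := by
  obtain ⟨n, rfl⟩ : ∃ n, i = n + 1 := ⟨i - 1, by omega⟩
  rw [show 2 * (n + 1) - 1 = 2 * n + 1 by omega,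
    ← sum_antidiagonal_succ_choose_mul_doubleFactorial_two_mul_sub_one,
    Nat.sum_antidiagonal_eq_sum_range_succ_mk, ← Ico_add_one_right_eq_Icc, sum_Ico_eq_sum_range,
    add_tsub_cancel_right]
  refine sum_congr rfl fun k _ => ?_
  rw [add_comm 1 k, show 2 * (k + 1) - 3 = 2 * k - 1 by omega, Nat.add_sub_add_right, mul_assoc]
end

section
/- Let j ≥ 2 be an integer. If the double factorial summation formula holds at index j−1, i.e. Σ_{k=1}^{j−1} C(j−1,k) · (2k−3)!! · (2(j−k)−3)!! = (2j−3)!!, then it holds at index j, i.e. Σ_{k=1}^{j} C(j,k) · (2k−3)!! · (2(j−k)−1)!! = (2j−1)!!. -/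
open Finset Nat

lemma dfac_step_aux (n : ℕ) (hn : 1 ≤ n) : (2*n-1)‼ = (2*n-1) * (2*n-3)‼ := by
  obtain ⟨p, rfl⟩ : ∃ p, n = p + 1 := ⟨n - 1, by omega⟩
  cases p with
  | zero => simp [Nat.doubleFactorial]
  | succ q =>
    have h1 : 2*(q+1+1)-1 = (2*q+1) + 2 := by omega
    have h2 : 2*(q+1+1)-3 = 2*q+1 := by omega
    rw [h1, h2, Nat.doubleFactorial_add_two]

/-- Induction step of the double factorial summation formula: if the formula holds
at index `j − 1`, then it holds at index `j`, for `j ≥ 2`.  Natural-number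
subtraction truncates negative arguments to `0` and `0‼ = 1`, matching `(−1)!! = 1`. -/
theorem double_factorial_summation_step (j : ℕ) (hj : 2 ≤ j)
    (ih : ∑ k ∈ Finset.Icc 1 (j - 1),
        (j - 1).choose k * (2 * k - 3)‼ * (2 * (j - k) - 3)‼ = (2 * j - 3)‼) :
    ∑ k ∈ Finset.Icc 1 j, j.choose k * (2 * k - 3)‼ * (2 * (j - k) - 1)‼
      = (2 * j - 1)‼ := by
  obtain ⟨m, rfl⟩ : ∃ m, j = m + 2 := ⟨j - 2, by omega⟩
  clear hj
  -- rewrite ih as a range sum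
  rw [show m+2-1 = m+1 from rfl, ← Finset.Ico_add_one_right_eq_Icc, Finset.sum_Ico_eq_sum_range] at ih
  rw [show m+1+1-1 = m+1 from rfl, show 2*(m+2)-3 = 2*m+1 from by omega] at ih
  rw [← Finset.Ico_add_one_right_eq_Icc, Finset.sum_Ico_eq_sum_range, show m+2+1-1 = m+2 from rfl]
  have key : ∀ i ∈ Finset.range (m+2),
      (m+2).choose (1+i) * (2*(1+i)-3)‼ * (2*(m+2-(1+i))-1)‼
      = (2*(m+1-i)-1) * ((m+1).choose (1+i) * (2*(1+i)-3)‼ * (2*(m+2-(1+i))-3)‼)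
      + (m+1).choose i * (2*(1+i)-3)‼ * (2*(m+1-i)-1)‼ := by
    intro i hi
    simp only [Finset.mem_range] at hi
    have hch : (m+2).choose (1+i) = (m+1).choose i + (m+1).choose (1+i) := by
      rw [Nat.add_comm 1 i]
      exact Nat.choose_succ_succ (m+1) i
    have he : m+2-(1+i) = m+1-i := by omega
    rw [he, hch, Nat.add_mul, Nat.add_mul]
    rcases Nat.lt_or_ge i (m+1) with h | h
    · rw [dfac_step_aux (m+1-i) (by omega)]; ring
    · have him : i = m+1 := by omega
      subst him
      have : (m+1).choose (1+(m+1)) = 0 := by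
        apply Nat.choose_eq_zero_of_lt; omega
      simp [this]
  rw [Finset.sum_congr rfl key, Finset.sum_add_distrib]
  have hB : ∑ i ∈ Finset.range (m+2),
      (2*(m+1-i)-1) * ((m+1).choose (1+i) * (2*(1+i)-3)‼ * (2*(m+2-(1+i))-3)‼)
      = ∑ i ∈ Finset.range (m+1),
      (2*(m+1-i)-1) * ((m+1).choose (1+i) * (2*(1+i)-3)‼ * (2*(m+2-(1+i))-3)‼) := by
    rw [Finset.sum_range_succ]
    have : (m+1).choose (1+(m+1)) = 0 := by
      apply Nat.choose_eq_zero_of_lt; omega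
    simp [this]
  have hC : ∑ i ∈ Finset.range (m+2),
      (m+1).choose i * (2*(1+i)-3)‼ * (2*(m+1-i)-1)‼
      = ∑ i ∈ Finset.range (m+1),
      (m+1).choose (i+1) * (2*(1+(i+1))-3)‼ * (2*(m+1-(i+1))-1)‼ + (2*m+1)‼ := by
    rw [Finset.sum_range_succ']
    congr 1
    have h1 : 2*(1+0)-3 = 0 := by omega
    have h2 : 2*(m+1-0)-1 = 2*m+1 := by omega
    rw [h1, h2]
    simp [Nat.doubleFactorial]
  rw [hB, hC, ← Nat.add_assoc, ← Finset.sum_add_distrib]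
  have key2 : ∀ i ∈ Finset.range (m+1),
      (2*(m+1-i)-1) * ((m+1).choose (1+i) * (2*(1+i)-3)‼ * (2*(m+2-(1+i))-3)‼)
      + (m+1).choose (i+1) * (2*(1+(i+1))-3)‼ * (2*(m+1-(i+1))-1)‼
      = (2*m+2) * ((m+1).choose (1+i) * (2*(1+i)-3)‼ * (2*(m+2-(1+i))-3)‼) := by
    intro i hi
    simp only [Finset.mem_range] at hi
    have h1 : 2*(1+(i+1))-3 = 2*(i+1)-1 := by omega
    have h2 : 2*(m+1-(i+1))-1 = 2*(m+2-(1+i))-3 := by omega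
    have h3 : (1:ℕ)+i = i+1 := by omega
    rw [h1, h2, dfac_step_aux (i+1) (by omega)]
    have h4 : 2*(i+1)-3 = 2*(1+i)-3 := by omega
    rw [h4, h3]
    have h5 : 2*(m+1-i)-1 + (2*(i+1)-1) = 2*m+2 := by omega
    generalize (m+1).choose (i+1) = C
    generalize ((2*(1+i)-3)‼ : ℕ) = D
    generalize ((2*(m+2-(1+i))-3)‼ : ℕ) = E
    rw [← h5, Nat.add_mul]
    ring
  rw [Finset.sum_congr rfl key2, ← Finset.mul_sum, ih]
  rw [show 2*(m+2)-1 = (2*m+1)+2 from by omega, Nat.doubleFactorial_add_two]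
  ring
end

section
/- For every integer j ≥ 2, the sum a + b, where a = Σ_{k=1}^{j} C(j−1,k−1) · (2k−3)!! · (2(j−k)−1)!! and b = Σ_{k=1}^{j} C(j−1,k) · (2k−3)!! · (2(j−k)−1)!!, satisfies a + b = (2j−3)!! + (2j−2) · Σ_{k=1}^{j−1} C(j−1,k) · (2k−3)!! · (2(j−k)−3)!!. -/
open Finset Nat

lemma df_step (m : ℕ) (hm : 1 ≤ m) : (2*m - 1)‼ = (2*m-1) * (2*m-3)‼ := by
  rcases Nat.lt_or_ge m 2 with h | h
  · interval_cases m
    decide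
  · obtain ⟨n, rfl⟩ := Nat.exists_eq_add_of_le h
    have h1 : 2*(2+n) - 1 = (2*n+1) + 2 := by omega
    have h2 : 2*(2+n) - 3 = 2*n+1 := by omega
    rw [h1, h2, Nat.doubleFactorial_add_two]

/-- For every integer `j ≥ 2`, with
`a = Σ_{k=1}^{j} C(j−1,k−1)·(2k−3)!!·(2(j−k)−1)!!` and
`b = Σ_{k=1}^{j} C(j−1,k)·(2k−3)!!·(2(j−k)−1)!!`, we have
`a + b = (2j−3)!! + (2j−2)·Σ_{k=1}^{j−1} C(j−1,k)·(2k−3)!!·(2(j−k)−3)!!`.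
Natural-number subtraction truncates negative arguments to `0` and `0‼ = 1`;
note `C(j−1, j) = 0`. -/
theorem double_factorial_a_add_b (j : ℕ) (hj : 2 ≤ j) :
    (∑ k ∈ Finset.Icc 1 j, (j - 1).choose (k - 1) * (2 * k - 3)‼ * (2 * (j - k) - 1)‼)
      + (∑ k ∈ Finset.Icc 1 j, (j - 1).choose k * (2 * k - 3)‼ * (2 * (j - k) - 1)‼)
      = (2 * j - 3)‼ +
        (2 * j - 2) *
          ∑ k ∈ Finset.Icc 1 (j - 1),
            (j - 1).choose k * (2 * k - 3)‼ * (2 * (j - k) - 3)‼ := by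
  have hins : Finset.Icc 1 j = insert 1 (Finset.Icc 2 j) := by
    ext x; simp [Finset.mem_Icc]; omega
  have hshift : Finset.Icc 2 j = (Finset.Icc 1 (j-1)).map (addRightEmbedding 1) := by
    rw [Finset.map_add_right_Icc]; congr 1; omega
  have hb : Finset.Icc 1 j = insert j (Finset.Icc 1 (j-1)) := by
    ext x; simp [Finset.mem_Icc]; omega
  have ha : (∑ k ∈ Finset.Icc 1 j, (j - 1).choose (k - 1) * (2 * k - 3)‼ * (2 * (j - k) - 1)‼)
      = (2*j-3)‼ + ∑ k ∈ Finset.Icc 1 (j-1),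
          (j - 1).choose k * (2 * (k+1) - 3)‼ * (2 * (j - (k+1)) - 1)‼ := by
    rw [hins, Finset.sum_insert (by simp), hshift, Finset.sum_map]
    simp only [addRightEmbedding_apply, Nat.add_sub_cancel]
    congr 1
    have h1 : 2*1 - 3 = 0 := by omega
    have h2 : 2*(j-1) - 1 = 2*j - 3 := by omega
    simp [h1, h2]
  have hbsum : (∑ k ∈ Finset.Icc 1 j, (j - 1).choose k * (2 * k - 3)‼ * (2 * (j - k) - 1)‼)
      = ∑ k ∈ Finset.Icc 1 (j-1), (j - 1).choose k * (2 * k - 3)‼ * (2 * (j - k) - 1)‼ := by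
    rw [hb, Finset.sum_insert (by simp [Finset.mem_Icc]; omega)]
    have : (j-1).choose j = 0 := Nat.choose_eq_zero_of_lt (by omega)
    simp [this]
  rw [ha, hbsum, add_assoc, ← Finset.sum_add_distrib, Finset.mul_sum]
  congr 1
  apply Finset.sum_congr rfl
  intro k hk
  simp only [Finset.mem_Icc] at hk
  obtain ⟨hk1, hk2⟩ := hk
  have e1 : 2 * (k+1) - 3 = 2*k - 1 := by omega
  have e2 : 2 * (j - (k+1)) - 1 = 2*(j-k) - 3 := by omega
  rw [e1, e2, df_step k hk1, df_step (j-k) (by omega)]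
  have hxy : (2*k-1) + (2*(j-k)-1) = 2*j-2 := by omega
  rw [← hxy]
  ring
end

section
/- In the abstract setting below, suppose v : ℕ → E satisfies, for every integer d ≥ 2, the recursion A(v_d) = −Σ_{k=1}^{d−1} C(d−1,k) • (M(v_k))(v_{d−k}), where C(d−1,k) is the binomial coefficient regarded as a real scalar. Then for every integer d ≥ 2, ‖v_d‖ ≤ (2d−3)!! · ρ^{d−1} · ‖v_1‖^d. -/
open Finset Nat

lemma sum_Icc_one' {β : Type*} [AddCommMonoid β] (g : ℕ → β) (n : ℕ) :
    ∑ k ∈ Finset.Icc 1 n, g k = ∑ j ∈ Finset.range n, g (j+1) := by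
  rw [← Finset.Ico_add_one_right_eq_Icc, Finset.sum_Ico_eq_sum_range]
  simp [add_comm]

lemma dfac_step (k : ℕ) : (2*(k+1)-1)‼ = (2*k+1) * (2*k-1)‼ := by
  rcases k with _|n
  · decide
  · rw [show 2*(n+1)-1 = 2*n+1 by omega, show 2*(n+1+1)-1 = 2*n+1+2 by omega,
      Nat.doubleFactorial_add_two, show 2*(n+1)+1 = 2*n+1+2 by omega]

lemma key_ident : ∀ m : ℕ, 1 ≤ m →
    ∑ k ∈ Finset.Icc 1 m, m.choose k * (2*(k-1)-1)‼ * (2*(m-k)-1)‼ = (2*m-1)‼ := by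
  intro m hm
  induction m, hm using Nat.le_induction with
  | base => decide
  | succ m hm ih =>
    rw [sum_Icc_one'] at ih ⊢
    have h1 : ∀ j ∈ Finset.range (m+1),
        (m+1).choose (j+1) * (2*(j+1-1)-1)‼ * (2*(m+1-(j+1))-1)‼
        = m.choose j * (2*j-1)‼ * (2*(m-j)-1)‼
          + m.choose (j+1) * (2*j-1)‼ * (2*(m-j)-1)‼ := by
      intro j _
      rw [Nat.choose_succ_succ', show j+1-1 = j by omega, show m+1-(j+1) = m-j by omega,
        add_mul, add_mul]
    rw [Finset.sum_congr rfl h1, Finset.sum_add_distrib]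
    -- first sum: split off j = 0
    rw [Finset.sum_range_succ' (fun j => m.choose j * (2*j-1)‼ * (2*(m-j)-1)‼) m]
    -- second sum: last term vanishes
    rw [Finset.sum_range_succ (fun j => m.choose (j+1) * (2*j-1)‼ * (2*(m-j)-1)‼) m]
    rw [Nat.choose_succ_self]
    have h2 : ∀ j ∈ Finset.range m,
        m.choose (j+1) * (2*(j+1)-1)‼ * (2*(m-(j+1))-1)‼
        = (2*j+1) * (m.choose (j+1) * (2*(j+1-1)-1)‼ * (2*(m-(j+1))-1)‼) := by
      intro j _
      rw [dfac_step, show j+1-1 = j by omega]; ring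
    have h3 : ∀ j ∈ Finset.range m,
        m.choose (j+1) * (2*j-1)‼ * (2*(m-j)-1)‼
        = (2*(m-(j+1))+1) * (m.choose (j+1) * (2*(j+1-1)-1)‼ * (2*(m-(j+1))-1)‼) := by
      intro j hj
      have hjm : j < m := Finset.mem_range.mp hj
      rw [show m-j = (m-(j+1))+1 by omega, dfac_step, show j+1-1 = j by omega]; ring
    rw [Finset.sum_congr rfl h2, Finset.sum_congr rfl h3]
    have h4 : ∀ j ∈ Finset.range m,
        (2*j+1) * (m.choose (j+1) * (2*(j+1-1)-1)‼ * (2*(m-(j+1))-1)‼)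
        + (2*(m-(j+1))+1) * (m.choose (j+1) * (2*(j+1-1)-1)‼ * (2*(m-(j+1))-1)‼)
        = 2*m * (m.choose (j+1) * (2*(j+1-1)-1)‼ * (2*(m-(j+1))-1)‼) := by
      intro j hj
      have hjm : j < m := Finset.mem_range.mp hj
      rw [← add_mul, show 2*j+1 + (2*(m-(j+1))+1) = 2*m by omega]
    have hz : (0:ℕ) * (2 * m - 1)‼ * (2 * (m - m) - 1)‼ = 0 := by simp
    rw [hz, add_zero, add_right_comm, ← Finset.sum_add_distrib, Finset.sum_congr rfl h4,
      ← Finset.mul_sum, ih, dfac_step]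
    have h0 : m.choose 0 * (2*0-1)‼ * (2*(m-0)-1)‼ = (2*m-1)‼ := by
      simp [Nat.doubleFactorial]
    rw [h0]; ring

/-- Proposition 2 (abstract form).  `E` a real normed space, `A : E ≃L[ℝ] E`,
`ρ = ‖A⁻¹‖·‖A‖`, and `M : E → (E →L[ℝ] E)` with `‖M w‖ ≤ ‖A‖·‖w‖` for all `w`.
If `v : ℕ → E` satisfies, for every `d ≥ 2`,
`A v_d = −Σ_{k=1}^{d−1} C(d−1,k) • (M v_k) (v_{d−k})`,
then for every `d ≥ 2`, `‖v_d‖ ≤ (2d−3)!! · ρ^{d−1} · ‖v_1‖^d`. -/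
theorem norm_voltage_derivative_bound
    {E : Type*} [NormedAddCommGroup E] [NormedSpace ℝ E]
    (A : E ≃L[ℝ] E) (M : E → (E →L[ℝ] E))
    (hM : ∀ w : E, ‖M w‖ ≤ ‖(A : E →L[ℝ] E)‖ * ‖w‖)
    (ρ : ℝ) (hρ : ρ = ‖(A.symm : E →L[ℝ] E)‖ * ‖(A : E →L[ℝ] E)‖)
    (v : ℕ → E)
    (hv : ∀ d : ℕ, 2 ≤ d →
      A (v d) = -∑ k ∈ Finset.Icc 1 (d - 1),
        ((d - 1).choose k : ℝ) • (M (v k)) (v (d - k))) :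
    ∀ d : ℕ, 2 ≤ d →
      ‖v d‖ ≤ ((2 * d - 3)‼ : ℝ) * ρ ^ (d - 1) * ‖v 1‖ ^ d := by
  have hρ0 : 0 ≤ ρ := hρ ▸ mul_nonneg (norm_nonneg _) (norm_nonneg _)
  have hA0 : (0:ℝ) ≤ ‖(A : E →L[ℝ] E)‖ := norm_nonneg _
  have hv10 : (0:ℝ) ≤ ‖v 1‖ := norm_nonneg _
  have H : ∀ d : ℕ, 1 ≤ d → ‖v d‖ ≤ ((2*(d-1)-1)‼ : ℝ) * ρ ^ (d-1) * ‖v 1‖ ^ d := by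
    intro d
    induction d using Nat.strong_induction_on with
    | _ d IH =>
      intro hd1
      rcases eq_or_lt_of_le hd1 with h1 | hd2
      · -- d = 1
        rw [← h1]
        norm_num [Nat.doubleFactorial]
      · have hd2 : 2 ≤ d := hd2
        -- per-term bound
        have hterm : ∀ k ∈ Finset.Icc 1 (d-1),
            ‖((d - 1).choose k : ℝ) • (M (v k)) (v (d - k))‖ ≤
            ((d-1).choose k * ((2*(k-1)-1)‼ * (2*((d-1)-k)-1)‼) : ℝ)
              * (‖(A : E →L[ℝ] E)‖ * (ρ ^ (d-2) * ‖v 1‖ ^ d)) := by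
          intro k hk
          rw [Finset.mem_Icc] at hk
          obtain ⟨hk1, hk2⟩ := hk
          have hkd : k < d := by omega
          have hdk1 : 1 ≤ d - k := by omega
          have hdkd : d - k < d := by omega
          have ih1 := IH k hkd hk1
          have ih2 := IH (d-k) hdkd hdk1
          have hb1 : (0:ℝ) ≤ ((2*(k-1)-1)‼ : ℝ) := by positivity
          calc ‖((d - 1).choose k : ℝ) • (M (v k)) (v (d - k))‖
              = ((d-1).choose k : ℝ) * ‖(M (v k)) (v (d - k))‖ := by
                rw [norm_smul, Real.norm_natCast]
            _ ≤ ((d-1).choose k : ℝ) * (‖M (v k)‖ * ‖v (d - k)‖) := by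
                gcongr
                exact (M (v k)).le_opNorm _
            _ ≤ ((d-1).choose k : ℝ) * ((‖(A : E →L[ℝ] E)‖ * ‖v k‖) * ‖v (d - k)‖) := by
                gcongr
                exact hM _
            _ ≤ ((d-1).choose k : ℝ) * ((‖(A : E →L[ℝ] E)‖ *
                  (((2*(k-1)-1)‼ : ℝ) * ρ ^ (k-1) * ‖v 1‖ ^ k)) *
                  (((2*((d-k)-1)-1)‼ : ℝ) * ρ ^ ((d-k)-1) * ‖v 1‖ ^ (d-k))) := by
                gcongr
            _ = ((d-1).choose k * ((2*(k-1)-1)‼ * (2*((d-1)-k)-1)‼) : ℝ)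
                  * (‖(A : E →L[ℝ] E)‖ * (ρ ^ (d-2) * ‖v 1‖ ^ d)) := by
                have e0 : (d-k)-1 = (d-1)-k := by omega
                have e1 : ρ ^ (k-1) * ρ ^ ((d-k)-1) = ρ ^ (d-2) := by
                  rw [← pow_add]; congr 1; omega
                have e2 : ‖v 1‖ ^ k * ‖v 1‖ ^ (d-k) = ‖v 1‖ ^ d := by
                  rw [← pow_add]; congr 1; omega
                rw [e0] at *
                rw [← e1, ← e2]; ring
        calc ‖v d‖ = ‖(A.symm : E →L[ℝ] E) (A (v d))‖ := by
              simp
          _ ≤ ‖(A.symm : E →L[ℝ] E)‖ * ‖A (v d)‖ :=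
              (A.symm : E →L[ℝ] E).le_opNorm _
          _ ≤ ‖(A.symm : E →L[ℝ] E)‖ *
                ((∑ k ∈ Finset.Icc 1 (d-1), ((d-1).choose k * ((2*(k-1)-1)‼ *
                  (2*((d-1)-k)-1)‼) : ℝ)) * (‖(A : E →L[ℝ] E)‖ * (ρ ^ (d-2) * ‖v 1‖ ^ d))) := by
              gcongr ‖(A.symm : E →L[ℝ] E)‖ * ?_
              rw [hv d hd2, norm_neg, Finset.sum_mul]
              exact (norm_sum_le _ _).trans (Finset.sum_le_sum hterm)
          _ = ((2*(d-1)-1)‼ : ℝ) * ρ ^ (d-1) * ‖v 1‖ ^ d := by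
              have hk := key_ident (d-1) (by omega)
              have hsum : (∑ k ∈ Finset.Icc 1 (d-1), ((d-1).choose k * ((2*(k-1)-1)‼ *
                  (2*((d-1)-k)-1)‼) : ℝ)) = ((2*(d-1)-1)‼ : ℝ) := by
                push_cast [← hk, mul_assoc]
                rfl
              rw [hsum, hρ, show d-1 = (d-2)+1 by omega, pow_succ]
              ring
  intro d hd
  have := H d (by omega)
  rwa [show 2*d-3 = 2*(d-1)-1 by omega]
end

section
/- In the abstract setting below, suppose v_1, v_2, v_3 ∈ E satisfy A(v_2) = −(M(v_1))(v_1) and A(v_3) = −2 • (M(v_2))(v_1) − (M(v_1))(v_2). Then ‖v_3‖ ≤ 3 · ρ² · ‖v_1‖³. -/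
/-- The `d = 3` case of Proposition 2 (abstract form).  `E` a real normed space,
`A : E ≃L[ℝ] E`, `ρ = ‖A⁻¹‖·‖A‖`, and `M : E → (E →L[ℝ] E)` with
`‖M w‖ ≤ ‖A‖·‖w‖` for all `w`.  If `A v₂ = −(M v₁) v₁` and
`A v₃ = −2 • (M v₂) v₁ − (M v₁) v₂` then `‖v₃‖ ≤ 3·ρ²·‖v₁‖³`. -/
theorem norm_third_derivative_bound
    {E : Type*} [NormedAddCommGroup E] [NormedSpace ℝ E]
    (A : E ≃L[ℝ] E) (M : E → (E →L[ℝ] E))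
    (hM : ∀ w : E, ‖M w‖ ≤ ‖(A : E →L[ℝ] E)‖ * ‖w‖)
    (ρ : ℝ) (hρ : ρ = ‖(A.symm : E →L[ℝ] E)‖ * ‖(A : E →L[ℝ] E)‖)
    (v₁ v₂ v₃ : E)
    (h₂ : A v₂ = -(M v₁) v₁)
    (h₃ : A v₃ = -((2 : ℝ) • (M v₂) v₁) - (M v₁) v₂) :
    ‖v₃‖ ≤ 3 * ρ ^ 2 * ‖v₁‖ ^ 3 := by
  set a := ‖(A : E →L[ℝ] E)‖ with ha
  set b := ‖(A.symm : E →L[ℝ] E)‖ with hb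
  have ha0 : 0 ≤ a := norm_nonneg _
  have hb0 : 0 ≤ b := norm_nonneg _
  have hv1 : 0 ≤ ‖v₁‖ := norm_nonneg _
  have hsym : ∀ w : E, ‖w‖ ≤ b * ‖A w‖ := by
    intro w
    calc ‖w‖ = ‖(A.symm : E →L[ℝ] E) (A w)‖ := by simp
    _ ≤ b * ‖A w‖ := ContinuousLinearMap.le_opNorm _ _
  have hMv : ∀ u w : E, ‖(M u) w‖ ≤ a * ‖u‖ * ‖w‖ := by
    intro u w
    calc ‖(M u) w‖ ≤ ‖M u‖ * ‖w‖ := ContinuousLinearMap.le_opNorm _ _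
    _ ≤ a * ‖u‖ * ‖w‖ := by
        exact mul_le_mul_of_nonneg_right (hM u) (norm_nonneg _)
  have h2 : ‖v₂‖ ≤ b * (a * ‖v₁‖ * ‖v₁‖) := by
    calc ‖v₂‖ ≤ b * ‖A v₂‖ := hsym v₂
    _ = b * ‖(M v₁) v₁‖ := by rw [h₂, norm_neg]
    _ ≤ b * (a * ‖v₁‖ * ‖v₁‖) := mul_le_mul_of_nonneg_left (hMv v₁ v₁) hb0
  have hA3 : ‖A v₃‖ ≤ 2 * (a * ‖v₂‖ * ‖v₁‖) + a * ‖v₁‖ * ‖v₂‖ := by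
    calc ‖A v₃‖ = ‖-((2 : ℝ) • (M v₂) v₁) - (M v₁) v₂‖ := by rw [h₃]
    _ ≤ ‖-((2 : ℝ) • (M v₂) v₁)‖ + ‖(M v₁) v₂‖ := norm_sub_le _ _
    _ = 2 * ‖(M v₂) v₁‖ + ‖(M v₁) v₂‖ := by
        rw [norm_neg, norm_smul]; norm_num
    _ ≤ 2 * (a * ‖v₂‖ * ‖v₁‖) + a * ‖v₁‖ * ‖v₂‖ := by
        gcongr <;> [exact hMv v₂ v₁; exact hMv v₁ v₂]
  have h3 : ‖v₃‖ ≤ b * (2 * (a * ‖v₂‖ * ‖v₁‖) + a * ‖v₁‖ * ‖v₂‖) :=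
    (hsym v₃).trans (mul_le_mul_of_nonneg_left hA3 hb0)
  rw [hρ]
  nlinarith [mul_le_mul_of_nonneg_left h2 (mul_nonneg (mul_nonneg (mul_nonneg hb0 ha0) hb0) (mul_nonneg ha0 hv1)), mul_nonneg (mul_nonneg hb0 ha0) hv1]
end

section
/- In the abstract setting below, fix an integer d ≥ 2 and vectors v_1, …, v_{d−1} ∈ E such that ‖v_k‖ ≤ (2k−3)!! · ρ^{k−1} · ‖v_1‖^k for every 1 ≤ k ≤ d−1. Define b_d = −Σ_{k=1}^{d−1} C(d−1,k) • (M(v_k))(v_{d−k}), where C(d−1,k) is the binomial coefficient regarded as a real scalar. Then ‖b_d‖ ≤ (2d−3)!! · ρ^{d−2} · ‖A‖ · ‖v_1‖^d. -/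
open Finset Nat


def gg (j : ℕ) : ℕ := (2 * j - 1)‼

lemma gg_succ (m : ℕ) : gg (m + 1) = (2 * m + 1) * gg m := by
  cases m with
  | zero => rfl
  | succ m =>
    show (2 * (m + 2) - 1)‼ = (2 * (m + 1) + 1) * (2 * (m + 1) - 1)‼
    have h1 : 2 * (m + 2) - 1 = (2 * (m + 1) - 1) + 2 := by omega
    rw [h1, Nat.doubleFactorial_add_two]
    have h2 : 2 * (m + 1) - 1 + 2 = 2 * (m + 1) + 1 := by omega
    rw [h2]

lemma gsum (n : ℕ) (hn : 1 ≤ n) :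
    ∑ j ∈ Finset.range n, n.choose (j + 1) * gg j * gg (n - 1 - j) = gg n := by
  induction n, hn using Nat.le_induction with
  | base => simp [gg]
  | succ n hn ih =>
    have step : ∀ j ∈ Finset.range (n + 1),
        (n + 1).choose (j + 1) * gg j * gg (n + 1 - 1 - j)
          = n.choose j * gg j * gg (n - j) + n.choose (j + 1) * gg j * gg (n - j) := by
      intro j hj
      have h : n + 1 - 1 - j = n - j := by omega
      rw [h, Nat.choose_succ_succ, add_mul, add_mul]
    rw [Finset.sum_congr rfl step, Finset.sum_add_distrib]
    have hA : ∑ j ∈ Finset.range (n + 1), n.choose j * gg j * gg (n - j)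
        = gg n + ∑ j ∈ Finset.range n, n.choose (j + 1) * ((2 * j + 1) * gg j) * gg (n - 1 - j) := by
      rw [Finset.sum_range_succ']
      have h0 : n.choose 0 * gg 0 * gg (n - 0) = gg n := by simp [gg]
      rw [h0, add_comm]
      congr 1
      apply Finset.sum_congr rfl
      intro i hi
      have h : n - (i + 1) = n - 1 - i := by omega
      rw [h, gg_succ]
    have hB : ∑ j ∈ Finset.range (n + 1), n.choose (j + 1) * gg j * gg (n - j)
        = ∑ j ∈ Finset.range n, n.choose (j + 1) * gg j * ((2 * (n - 1 - j) + 1) * gg (n - 1 - j)) := by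
      rw [Finset.sum_range_succ, Nat.choose_succ_self, zero_mul, zero_mul, add_zero]
      apply Finset.sum_congr rfl
      intro j hj
      have hj' : j < n := Finset.mem_range.mp hj
      have h : n - j = (n - 1 - j) + 1 := by omega
      rw [h, gg_succ]
    rw [hA, hB, add_assoc, ← Finset.sum_add_distrib]
    have hcomb : ∑ j ∈ Finset.range n,
        (n.choose (j + 1) * ((2 * j + 1) * gg j) * gg (n - 1 - j)
          + n.choose (j + 1) * gg j * ((2 * (n - 1 - j) + 1) * gg (n - 1 - j)))
        = 2 * n * ∑ j ∈ Finset.range n, n.choose (j + 1) * gg j * gg (n - 1 - j) := by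
      rw [Finset.mul_sum]
      apply Finset.sum_congr rfl
      intro j hj
      have hj' : j < n := Finset.mem_range.mp hj
      have h : 2 * j + 1 + (2 * (n - 1 - j) + 1) = 2 * n := by omega
      rw [← h]; ring
    rw [hcomb, ih]
    rw [gg_succ]
    ring

lemma icc_sum (d : ℕ) (hd : 2 ≤ d) :
    ∑ k ∈ Finset.Icc 1 (d - 1), (d - 1).choose k * ((2 * k - 3)‼ * (2 * (d - k) - 3)‼)
      = (2 * d - 3)‼ := by
  have h := gsum (d - 1) (by omega)
  have hg : gg (d - 1) = (2 * d - 3)‼ := by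
    show (2 * (d - 1) - 1)‼ = (2 * d - 3)‼
    congr 1; omega
  have hIcc : Finset.Icc 1 (d - 1) = Finset.Ico 1 d := by
    rw [← Finset.Ico_add_one_right_eq_Icc]; congr 1; omega
  rw [← hg, ← h, hIcc, Finset.sum_Ico_eq_sum_range]
  apply Finset.sum_congr rfl
  intro j hj
  have hj' : j < d - 1 := Finset.mem_range.mp hj
  have e0 : 1 + j = j + 1 := by omega
  have e1 : 2 * (j + 1) - 3 = 2 * j - 1 := by omega
  have e2 : 2 * (d - (j + 1)) - 3 = 2 * (d - 1 - 1 - j) - 1 := by omega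
  rw [e0, e1, e2]
  show (d - 1).choose (j + 1) * ((2 * j - 1)‼ * (2 * (d - 1 - 1 - j) - 1)‼)
      = (d - 1).choose (j + 1) * gg j * gg (d - 1 - 1 - j)
  rw [gg, gg, mul_assoc]

/-- The key inequality in the induction step of Proposition 2 (abstract form).
`E` a real normed space, `A : E ≃L[ℝ] E`, `ρ = ‖A⁻¹‖·‖A‖`, and
`M : E → (E →L[ℝ] E)` with `‖M w‖ ≤ ‖A‖·‖w‖` for all `w`.  Fix `d ≥ 2` and
vectors `v_1, …, v_{d−1}` with `‖v_k‖ ≤ (2k−3)!!·ρ^{k−1}·‖v_1‖^k` for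
`1 ≤ k ≤ d−1`.  If `b_d = −Σ_{k=1}^{d−1} C(d−1,k) • (M v_k) (v_{d−k})` then
`‖b_d‖ ≤ (2d−3)!!·ρ^{d−2}·‖A‖·‖v_1‖^d`. -/
theorem norm_b_d_bound
    {E : Type*} [NormedAddCommGroup E] [NormedSpace ℝ E]
    (A : E ≃L[ℝ] E) (M : E → (E →L[ℝ] E))
    (hM : ∀ w : E, ‖M w‖ ≤ ‖(A : E →L[ℝ] E)‖ * ‖w‖)
    (ρ : ℝ) (hρ : ρ = ‖(A.symm : E →L[ℝ] E)‖ * ‖(A : E →L[ℝ] E)‖)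
    (d : ℕ) (hd : 2 ≤ d) (v : ℕ → E)
    (hv : ∀ k : ℕ, 1 ≤ k → k ≤ d - 1 →
      ‖v k‖ ≤ ((2 * k - 3)‼ : ℝ) * ρ ^ (k - 1) * ‖v 1‖ ^ k)
    (b : E)
    (hb : b = -∑ k ∈ Finset.Icc 1 (d - 1),
      ((d - 1).choose k : ℝ) • (M (v k)) (v (d - k))) :
    ‖b‖ ≤ ((2 * d - 3)‼ : ℝ) * ρ ^ (d - 2) * ‖(A : E →L[ℝ] E)‖ * ‖v 1‖ ^ d := by
  have hρ0 : 0 ≤ ρ := by rw [hρ]; positivity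
  set C := ‖(A : E →L[ℝ] E)‖ with hC
  have hC0 : 0 ≤ C := norm_nonneg _
  rw [hb, norm_neg]
  calc ‖∑ k ∈ Finset.Icc 1 (d - 1), ((d - 1).choose k : ℝ) • (M (v k)) (v (d - k))‖
      ≤ ∑ k ∈ Finset.Icc 1 (d - 1), ‖((d - 1).choose k : ℝ) • (M (v k)) (v (d - k))‖ :=
        norm_sum_le _ _
    _ ≤ ∑ k ∈ Finset.Icc 1 (d - 1),
        (((d - 1).choose k * ((2 * k - 3)‼ * (2 * (d - k) - 3)‼) : ℕ) : ℝ)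
          * (ρ ^ (d - 2) * C * ‖v 1‖ ^ d) := by
        apply Finset.sum_le_sum
        intro k hk
        obtain ⟨hk1, hk2⟩ := Finset.mem_Icc.mp hk
        have h1 : ‖v k‖ ≤ ((2 * k - 3)‼ : ℝ) * ρ ^ (k - 1) * ‖v 1‖ ^ k := hv k hk1 hk2
        have h2 : ‖v (d - k)‖ ≤ ((2 * (d - k) - 3)‼ : ℝ) * ρ ^ (d - k - 1) * ‖v 1‖ ^ (d - k) :=
          hv (d - k) (by omega) (by omega)
        have h1' : (0:ℝ) ≤ ((2 * k - 3)‼ : ℝ) * ρ ^ (k - 1) * ‖v 1‖ ^ k := by positivity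
        have hMk : ‖(M (v k)) (v (d - k))‖ ≤ C * (‖v k‖ * ‖v (d - k)‖) := by
          calc ‖(M (v k)) (v (d - k))‖ ≤ ‖M (v k)‖ * ‖v (d - k)‖ :=
                ContinuousLinearMap.le_opNorm _ _
            _ ≤ (C * ‖v k‖) * ‖v (d - k)‖ :=
                mul_le_mul_of_nonneg_right (hM _) (norm_nonneg _)
            _ = C * (‖v k‖ * ‖v (d - k)‖) := by ring
        have hprod : ‖v k‖ * ‖v (d - k)‖
            ≤ (((2 * k - 3)‼ : ℝ) * ρ ^ (k - 1) * ‖v 1‖ ^ k)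
              * (((2 * (d - k) - 3)‼ : ℝ) * ρ ^ (d - k - 1) * ‖v 1‖ ^ (d - k)) :=
          mul_le_mul h1 h2 (norm_nonneg _) h1'
        rw [norm_smul, Real.norm_eq_abs, Nat.abs_cast]
        have hfull : ‖(M (v k)) (v (d - k))‖
            ≤ C * ((((2 * k - 3)‼ : ℝ) * ρ ^ (k - 1) * ‖v 1‖ ^ k)
              * (((2 * (d - k) - 3)‼ : ℝ) * ρ ^ (d - k - 1) * ‖v 1‖ ^ (d - k))) :=
          hMk.trans (mul_le_mul_of_nonneg_left hprod hC0)
        have heq : C * ((((2 * k - 3)‼ : ℝ) * ρ ^ (k - 1) * ‖v 1‖ ^ k)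
              * (((2 * (d - k) - 3)‼ : ℝ) * ρ ^ (d - k - 1) * ‖v 1‖ ^ (d - k)))
            = (((2 * k - 3)‼ * (2 * (d - k) - 3)‼ : ℕ) : ℝ) * (ρ ^ (d - 2) * C * ‖v 1‖ ^ d) := by
          have e1 : ρ ^ (d - 2) = ρ ^ (k - 1) * ρ ^ (d - k - 1) := by
            rw [← pow_add]; congr 1; omega
          have e2 : ‖v 1‖ ^ d = ‖v 1‖ ^ k * ‖v 1‖ ^ (d - k) := by
            rw [← pow_add]; congr 1; omega
          push_cast
          rw [e1, e2]
          ring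
        calc ((d - 1).choose k : ℝ) * ‖(M (v k)) (v (d - k))‖
            ≤ ((d - 1).choose k : ℝ) * ((((2 * k - 3)‼ * (2 * (d - k) - 3)‼ : ℕ) : ℝ)
                * (ρ ^ (d - 2) * C * ‖v 1‖ ^ d)) := by
              apply mul_le_mul_of_nonneg_left _ (by positivity)
              rw [← heq]; exact hfull
          _ = (((d - 1).choose k * ((2 * k - 3)‼ * (2 * (d - k) - 3)‼) : ℕ) : ℝ)
                * (ρ ^ (d - 2) * C * ‖v 1‖ ^ d) := by push_cast; ring
    _ = ((2 * d - 3)‼ : ℝ) * ρ ^ (d - 2) * C * ‖v 1‖ ^ d := by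
        rw [← Finset.sum_mul, ← Nat.cast_sum, icc_sum d hd]
        ring
end

section
/- Let f : ℝ → ℝ be three times continuously differentiable on the closed interval [t₀, tₑ] with t₀ < tₑ, and let M₃ ≥ 0 satisfy |f'''(s)| ≤ M₃ for all s ∈ [t₀, tₑ]. Define the numerical second derivative D = (f'(tₑ) − f'(t₀))/(tₑ − t₀) and the beginning-point quadratic approximation g₀(t) = f(t₀) + (t − t₀)·f'(t₀) + ½·(t − t₀)²·D. Then for every t ∈ [t₀, tₑ], |f(t) − g₀(t)| ≤ (1/6)·(t − t₀)³·M₃ + ½·(t − t₀)²·(tₑ − t₀)·M₃. -/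
/-!
Each Taylor remainder of `f` at `t₀` has as derivative the Taylor remainder of one order lower
of `f'`, so integrating `|f'''| ≤ M₃` three times by the fencing form of the mean value theorem
bounds the second-order remainder by `M₃ (t - t₀)³ / 6`. The first-order remainder of `f'` at
`tₑ`, bounded by `M₃ (tₑ - t₀)² / 2`, shows that the divided difference `D` is within
`M₃ (tₑ - t₀) / 2` of `f''(t₀)`; replacing `f''(t₀)` by `D` therefore costs at most
`(t - t₀)² / 2 · M₃ (tₑ - t₀) / 2`.
-/

open Set

theorem norm_sub_le_of_norm_deriv_le_mul_pow {E : Type*} [NormedAddCommGroup E]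
    [NormedSpace ℝ E] {a b C : ℝ} {n : ℕ} {g g' : ℝ → E}
    (hg : ∀ s ∈ Icc a b, HasDerivWithinAt g (g' s) (Icc a b) s)
    (bound : ∀ s ∈ Icc a b, ‖g' s‖ ≤ C * (s - a) ^ n) :
    ∀ t ∈ Icc a b, ‖g t - g a‖ ≤ C * (t - a) ^ (n + 1) / (n + 1) := by
  have hB : ∀ s, HasDerivAt (fun s => C * (s - a) ^ (n + 1) / (n + 1)) (C * (s - a) ^ n) s := by
    intro s
    refine ((((hasDerivAt_pow (n + 1) (s - a)).comp_sub_const s a).const_mul C).div_const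
      ((n : ℝ) + 1)).congr_deriv ?_
    push_cast
    field_simp
  intro t ht
  refine image_norm_le_of_norm_deriv_right_le_deriv_boundary (f := fun s => g s - g a)
    (fun s hs => ((hg s hs).sub_const (g a)).continuousWithinAt) (fun s hs => ?_) (by simp) hB
    (fun s hs => bound s (Ico_subset_Icc_self hs)) ht
  exact ((hg s (Ico_subset_Icc_self hs)).sub_const (g a)).mono_of_mem_nhdsWithin
    (Icc_mem_nhdsGE_of_mem hs)

section Taylor

variable {a b M : ℝ} {f f' f'' f''' : ℝ → ℝ}

theorem abs_taylor_remainder_one_le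
    (hf : ∀ s ∈ Icc a b, HasDerivWithinAt f (f' s) (Icc a b) s)
    (hf' : ∀ s ∈ Icc a b, HasDerivWithinAt f' (f'' s) (Icc a b) s)
    (bound : ∀ s ∈ Icc a b, |f'' s| ≤ M) :
    ∀ t ∈ Icc a b, |f t - f a - (t - a) * f' a| ≤ M * (t - a) ^ 2 / 2 := by
  have hderiv : ∀ s ∈ Icc a b, |f' s - f' a| ≤ M * (s - a) ^ 1 := by
    simpa using norm_sub_le_of_norm_deriv_le_mul_pow (n := 0) hf' (by simpa using bound)
  intro t ht
  have hrem : ∀ s ∈ Icc a b, HasDerivWithinAt (fun s => f s - (s - a) * f' a)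
      (f' s - f' a) (Icc a b) s := fun s hs => by
    simpa using (hf s hs).fun_sub (((hasDerivWithinAt_id s _).sub_const a).mul_const (f' a))
  calc |f t - f a - (t - a) * f' a|
      = ‖(f t - (t - a) * f' a) - (f a - (a - a) * f' a)‖ := by rw [Real.norm_eq_abs]; ring_nf
    _ ≤ M * (t - a) ^ (1 + 1) / ((1 : ℕ) + 1) :=
        norm_sub_le_of_norm_deriv_le_mul_pow hrem hderiv t ht
    _ = M * (t - a) ^ 2 / 2 := by norm_num

theorem abs_taylor_remainder_two_le
    (hf : ∀ s ∈ Icc a b, HasDerivWithinAt f (f' s) (Icc a b) s)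
    (hf' : ∀ s ∈ Icc a b, HasDerivWithinAt f' (f'' s) (Icc a b) s)
    (hf'' : ∀ s ∈ Icc a b, HasDerivWithinAt f'' (f''' s) (Icc a b) s)
    (bound : ∀ s ∈ Icc a b, |f''' s| ≤ M) :
    ∀ t ∈ Icc a b,
      |f t - f a - (t - a) * f' a - (t - a) ^ 2 / 2 * f'' a| ≤ M * (t - a) ^ 3 / 6 := by
  have hderiv : ∀ s ∈ Icc a b, |f' s - f' a - (s - a) * f'' a| ≤ M / 2 * (s - a) ^ 2 := by
    simpa only [mul_div_right_comm] using abs_taylor_remainder_one_le hf' hf'' bound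
  intro t ht
  have hrem : ∀ s ∈ Icc a b,
      HasDerivWithinAt (fun s => f s - (s - a) * f' a - (s - a) ^ 2 / 2 * f'' a)
      (f' s - f' a - (s - a) * f'' a) (Icc a b) s := fun s hs => by
    have hsq : HasDerivAt (fun s => (s - a) ^ 2 / 2 * f'' a) ((s - a) * f'' a) s :=
      ((((hasDerivAt_pow 2 (s - a)).comp_sub_const s a).div_const 2).mul_const
        (f'' a)).congr_deriv (by ring)
    simpa using ((hf s hs).fun_sub (((hasDerivWithinAt_id s _).sub_const a).mul_const
      (f' a))).fun_sub hsq.hasDerivWithinAt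
  calc |f t - f a - (t - a) * f' a - (t - a) ^ 2 / 2 * f'' a|
      = ‖(f t - (t - a) * f' a - (t - a) ^ 2 / 2 * f'' a)
          - (f a - (a - a) * f' a - (a - a) ^ 2 / 2 * f'' a)‖ := by
        rw [Real.norm_eq_abs]; ring_nf
    _ ≤ M / 2 * (t - a) ^ (2 + 1) / ((2 : ℕ) + 1) :=
        norm_sub_le_of_norm_deriv_le_mul_pow hrem hderiv t ht
    _ = M * (t - a) ^ 3 / 6 := by ring

theorem abs_div_sub_deriv_le (hab : a < b)
    (hf : ∀ s ∈ Icc a b, HasDerivWithinAt f (f' s) (Icc a b) s)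
    (hf' : ∀ s ∈ Icc a b, HasDerivWithinAt f' (f'' s) (Icc a b) s)
    (bound : ∀ s ∈ Icc a b, |f'' s| ≤ M) :
    |(f b - f a) / (b - a) - f' a| ≤ M * (b - a) / 2 := by
  have hba : 0 < b - a := sub_pos.2 hab
  have h := abs_taylor_remainder_one_le hf hf' bound b (right_mem_Icc.2 hab.le)
  rw [show (f b - f a) / (b - a) - f' a = (f b - f a - (b - a) * f' a) / (b - a) by
    field_simp, abs_div, abs_of_pos hba, div_le_iff₀ hba]
  linarith

end Taylor

theorem beginning_point_taylor_error_general
    (t₀ tₑ : ℝ) (ht : t₀ < tₑ)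
    (f f' f'' f''' : ℝ → ℝ)
    (hf : ∀ t ∈ Icc t₀ tₑ, HasDerivWithinAt f (f' t) (Icc t₀ tₑ) t)
    (hf' : ∀ t ∈ Icc t₀ tₑ, HasDerivWithinAt f' (f'' t) (Icc t₀ tₑ) t)
    (hf'' : ∀ t ∈ Icc t₀ tₑ, HasDerivWithinAt f'' (f''' t) (Icc t₀ tₑ) t)
    (M₃ : ℝ) (hM₃ : 0 ≤ M₃)
    (hbound : ∀ s ∈ Icc t₀ tₑ, |f''' s| ≤ M₃) :
    ∀ t ∈ Icc t₀ tₑ,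
      |f t - (f t₀ + (t - t₀) * f' t₀ +
        (1 / 2) * (t - t₀) ^ 2 * ((f' tₑ - f' t₀) / (tₑ - t₀)))| ≤
      (1 / 6) * (t - t₀) ^ 3 * M₃ + (1 / 2) * (t - t₀) ^ 2 * (tₑ - t₀) * M₃ := by
  intro t htt
  have hrem := abs_taylor_remainder_two_le hf hf' hf'' hbound t htt
  have hdiv := abs_div_sub_deriv_le ht hf' hf'' hbound
  have hsq : 0 ≤ (t - t₀) ^ 2 / 2 := by positivity
  calc _ = |(f t - f t₀ - (t - t₀) * f' t₀ - (t - t₀) ^ 2 / 2 * f'' t₀)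
          - (t - t₀) ^ 2 / 2 * ((f' tₑ - f' t₀) / (tₑ - t₀) - f'' t₀)| := by ring_nf
    _ ≤ |f t - f t₀ - (t - t₀) * f' t₀ - (t - t₀) ^ 2 / 2 * f'' t₀|
          + (t - t₀) ^ 2 / 2 * |(f' tₑ - f' t₀) / (tₑ - t₀) - f'' t₀| :=
        (abs_sub _ _).trans_eq (by rw [abs_mul, abs_of_nonneg hsq])
    _ ≤ M₃ * (t - t₀) ^ 3 / 6 + (t - t₀) ^ 2 / 2 * (M₃ * (tₑ - t₀) / 2) := by gcongr
    _ ≤ (1 / 6) * (t - t₀) ^ 3 * M₃ + (1 / 2) * (t - t₀) ^ 2 * (tₑ - t₀) * M₃ := by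
        nlinarith [mul_nonneg hsq (mul_nonneg hM₃ (sub_pos.2 ht).le)]

/-- Error bound for the beginning-point Taylor expansion `x(t, t₀)` in which the
exact second derivative is replaced by the numerical differentiation
`D = (f'(tₑ) − f'(t₀))/(tₑ − t₀)`.  If `f` is three times continuously
differentiable on `[t₀, tₑ]` with `|f'''| ≤ M₃` there, then for every
`t ∈ [t₀, tₑ]`,
`|f(t) − g₀(t)| ≤ (1/6)(t−t₀)³ M₃ + (1/2)(t−t₀)²(tₑ−t₀) M₃`, where
`g₀(t) = f(t₀) + (t−t₀) f'(t₀) + (1/2)(t−t₀)² D`. -/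
theorem beginning_point_taylor_error
    (t₀ tₑ : ℝ) (ht : t₀ < tₑ)
    (f f' f'' f''' : ℝ → ℝ)
    (hf : ∀ t ∈ Icc t₀ tₑ, HasDerivWithinAt f (f' t) (Icc t₀ tₑ) t)
    (hf' : ∀ t ∈ Icc t₀ tₑ, HasDerivWithinAt f' (f'' t) (Icc t₀ tₑ) t)
    (hf'' : ∀ t ∈ Icc t₀ tₑ, HasDerivWithinAt f'' (f''' t) (Icc t₀ tₑ) t)
    (hf'''c : ContinuousOn f''' (Icc t₀ tₑ))
    (M₃ : ℝ) (hM₃ : 0 ≤ M₃)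
    (hbound : ∀ s ∈ Icc t₀ tₑ, |f''' s| ≤ M₃) :
    ∀ t ∈ Icc t₀ tₑ,
      |f t - (f t₀ + (t - t₀) * f' t₀ +
        (1 / 2) * (t - t₀) ^ 2 * ((f' tₑ - f' t₀) / (tₑ - t₀)))| ≤
      (1 / 6) * (t - t₀) ^ 3 * M₃ + (1 / 2) * (t - t₀) ^ 2 * (tₑ - t₀) * M₃ :=
  beginning_point_taylor_error_general t₀ tₑ ht f f' f'' f''' hf hf' hf'' M₃ hM₃ hbound
end

section
/- Let f : ℝ → ℝ be three times continuously differentiable on the closed interval [t₀, tₑ] with t₀ < tₑ, and let M₃ ≥ 0 satisfy |f'''(s)| ≤ M₃ for all s ∈ [t₀, tₑ]. Define Δ = tₑ − t₀, the numerical second derivative D = (f'(tₑ) − f'(t₀))/Δ, the beginning-point approximation g₀(t) = f(t₀) + (t − t₀)·f'(t₀) + ½·(t − t₀)²·D, the ending-point approximation gₑ(t) = f(tₑ) + (t − tₑ)·f'(tₑ) + ½·(t − tₑ)²·D, the weight α(t) = (t − t₀)/Δ, and the combined time-varying function x̂(t) = (1 − α(t))·g₀(t) + α(t)·gₑ(t).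 Then for every t ∈ [t₀, tₑ], |f(t) − x̂(t)| ≤ M₃·[(1 − α(t))·((1/6)·(t − t₀)³ + ½·(t − t₀)²·Δ) + α(t)·((1/6)·(tₑ − t)³ + ½·(tₑ − t)²·Δ)]. -/
/-!
Comparing derivatives with those of `K / (n + 1) * |t - c| ^ (n + 1)`, three integrations of
`|f'''| ≤ M₃` from an endpoint `c` bound the quadratic Taylor remainder at `c` by
`M₃ |t - c|³ / 6`, and one integration of the same bound for `f'` shows that the difference
quotient `D` is within `M₃ Δ / 2` of `f''(c)` at both endpoints. Replacing `f''(c)` by `D`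
therefore costs at most `½ (t - c)² M₃ Δ`, and the error of the convex combination is at most the
same convex combination of the two endpoint errors.
-/

open Set

section Comparison

variable {g g' B B' : ℝ → ℝ} {a b : ℝ}

theorem monotoneOn_Icc_of_hasDerivWithinAt_nonneg {φ φ' : ℝ → ℝ}
    (hφ : ∀ s ∈ Icc a b, HasDerivWithinAt φ (φ' s) (Icc a b) s)
    (hφ' : ∀ s ∈ Icc a b, 0 ≤ φ' s) : MonotoneOn φ (Icc a b) :=
  monotoneOn_of_hasDerivWithinAt_nonneg (convex_Icc a b)
    (fun s hs => (hφ s hs).continuousWithinAt)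
    (fun s hs => (hφ s (interior_subset hs)).mono interior_subset)
    (fun s hs => hφ' s (interior_subset hs))

theorem abs_le_of_abs_deriv_le_deriv (hab : a ≤ b)
    (hg : ∀ s ∈ Icc a b, HasDerivWithinAt g (g' s) (Icc a b) s)
    (hB : ∀ s ∈ Icc a b, HasDerivWithinAt B (B' s) (Icc a b) s)
    (hle : ∀ s ∈ Icc a b, |g' s| ≤ B' s) (ha : |g a| ≤ B a) : |g b| ≤ B b := by
  have hsub : MonotoneOn (fun s => B s - g s) (Icc a b) :=
    monotoneOn_Icc_of_hasDerivWithinAt_nonneg (fun s hs => (hB s hs).sub (hg s hs))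
      (fun s hs => by linarith [le_abs_self (g' s), hle s hs])
  have hadd : MonotoneOn (fun s => B s + g s) (Icc a b) :=
    monotoneOn_Icc_of_hasDerivWithinAt_nonneg (fun s hs => (hB s hs).add (hg s hs))
      (fun s hs => by linarith [neg_abs_le (g' s), hle s hs])
  have h₁ := hsub (left_mem_Icc.2 hab) (right_mem_Icc.2 hab) hab
  have h₂ := hadd (left_mem_Icc.2 hab) (right_mem_Icc.2 hab) hab
  rw [abs_le] at ha ⊢
  constructor <;> dsimp only at h₁ h₂ <;> linarith

theorem abs_le_of_abs_deriv_le_neg_deriv (hab : a ≤ b)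
    (hg : ∀ s ∈ Icc a b, HasDerivWithinAt g (g' s) (Icc a b) s)
    (hB : ∀ s ∈ Icc a b, HasDerivWithinAt B (B' s) (Icc a b) s)
    (hle : ∀ s ∈ Icc a b, |g' s| ≤ -B' s) (hb : |g b| ≤ B b) : |g a| ≤ B a := by
  have hsub : MonotoneOn (fun s => g s - B s) (Icc a b) :=
    monotoneOn_Icc_of_hasDerivWithinAt_nonneg (fun s hs => (hg s hs).sub (hB s hs))
      (fun s hs => by linarith [neg_abs_le (g' s), hle s hs])
  have hneg : MonotoneOn (fun s => -g s - B s) (Icc a b) :=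
    monotoneOn_Icc_of_hasDerivWithinAt_nonneg (fun s hs => (hg s hs).neg.sub (hB s hs))
      (fun s hs => by linarith [le_abs_self (g' s), hle s hs])
  have h₁ := hsub (left_mem_Icc.2 hab) (right_mem_Icc.2 hab) hab
  have h₂ := hneg (left_mem_Icc.2 hab) (right_mem_Icc.2 hab) hab
  rw [abs_le] at hb ⊢
  constructor <;> dsimp only at h₁ h₂ <;> linarith

theorem abs_le_pow_of_abs_deriv_le_pow {c K : ℝ} (n : ℕ) (hc : c ∈ Icc a b)
    (hg : ∀ s ∈ Icc a b, HasDerivWithinAt g (g' s) (Icc a b) s) (hgc : g c = 0)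
    (hle : ∀ s ∈ Icc a b, |g' s| ≤ K * |s - c| ^ n) {t : ℝ} (ht : t ∈ Icc a b) :
    |g t| ≤ K / (n + 1) * |t - c| ^ (n + 1) := by
  rcases le_total c t with hct | htc
  · have hsub : Icc c t ⊆ Icc a b := Icc_subset_Icc hc.1 ht.2
    rw [abs_of_nonneg (sub_nonneg.2 hct)]
    refine abs_le_of_abs_deriv_le_deriv (B := fun s => K / (n + 1) * (s - c) ^ (n + 1))
      (B' := fun s => K * (s - c) ^ n) hct
      (fun s hs => (hg s (hsub hs)).mono hsub) (fun s _ => ?_) (fun s hs => ?_) (by simp [hgc])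
    · have := (((hasDerivAt_id' s).sub_const c).fun_pow (n + 1)).const_mul (K / (n + 1))
      refine (this.congr_deriv ?_).hasDerivWithinAt
      rw [Nat.add_sub_cancel]
      push_cast
      field_simp
    · simpa [abs_of_nonneg (sub_nonneg.2 hs.1)] using hle s (hsub hs)
  · have hsub : Icc t c ⊆ Icc a b := Icc_subset_Icc ht.1 hc.2
    rw [abs_sub_comm, abs_of_nonneg (sub_nonneg.2 htc)]
    refine abs_le_of_abs_deriv_le_neg_deriv (B := fun s => K / (n + 1) * (c - s) ^ (n + 1))
      (B' := fun s => -(K * (c - s) ^ n)) htc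
      (fun s hs => (hg s (hsub hs)).mono hsub) (fun s _ => ?_) (fun s hs => ?_) (by simp [hgc])
    · have := (((hasDerivAt_id' s).const_sub c).fun_pow (n + 1)).const_mul (K / (n + 1))
      refine (this.congr_deriv ?_).hasDerivWithinAt
      rw [Nat.add_sub_cancel]
      push_cast
      field_simp
    · simpa [abs_sub_comm, abs_of_nonneg (sub_nonneg.2 hs.2)] using hle s (hsub hs)

end Comparison

section Taylor

variable {f f' f'' f''' : ℝ → ℝ} {a b c M : ℝ}

theorem abs_sub_taylor_one_le (hc : c ∈ Icc a b)
    (hf : ∀ s ∈ Icc a b, HasDerivWithinAt f (f' s) (Icc a b) s)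
    (hf' : ∀ s ∈ Icc a b, HasDerivWithinAt f' (f'' s) (Icc a b) s)
    (hbound : ∀ s ∈ Icc a b, |f'' s| ≤ M) {t : ℝ} (ht : t ∈ Icc a b) :
    |f t - (f c + (t - c) * f' c)| ≤ M / 2 * (t - c) ^ 2 := by
  have hf'_sub : ∀ s ∈ Icc a b, |f' s - f' c| ≤ M * |s - c| ^ 1 := fun s hs => by
    simpa using abs_le_pow_of_abs_deriv_le_pow 0 hc (fun s hs => (hf' s hs).sub_const (f' c))
      (sub_self _) (by simpa using hbound) hs
  have hderiv : ∀ s ∈ Icc a b, HasDerivWithinAt (fun s => f s - (f c + (s - c) * f' c))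
      (f' s - f' c) (Icc a b) s := fun s hs => by
    simpa using (hf s hs).fun_sub ((((hasDerivAt_id' s).sub_const c).mul_const (f' c)).const_add
      (f c)).hasDerivWithinAt
  have := abs_le_pow_of_abs_deriv_le_pow 1 hc hderiv (by simp) hf'_sub ht
  norm_num at this
  exact this

theorem abs_sub_taylor_two_le (hc : c ∈ Icc a b)
    (hf : ∀ s ∈ Icc a b, HasDerivWithinAt f (f' s) (Icc a b) s)
    (hf' : ∀ s ∈ Icc a b, HasDerivWithinAt f' (f'' s) (Icc a b) s)
    (hf'' : ∀ s ∈ Icc a b, HasDerivWithinAt f'' (f''' s) (Icc a b) s)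
    (hbound : ∀ s ∈ Icc a b, |f''' s| ≤ M) {t : ℝ} (ht : t ∈ Icc a b) :
    |f t - (f c + (t - c) * f' c + 1 / 2 * (t - c) ^ 2 * f'' c)| ≤ M / 6 * |t - c| ^ 3 := by
  have hderiv : ∀ s ∈ Icc a b, HasDerivWithinAt
      (fun s => f s - (f c + (s - c) * f' c + 1 / 2 * (s - c) ^ 2 * f'' c))
      (f' s - (f' c + (s - c) * f'' c)) (Icc a b) s := fun s hs => by
    have hpoly := (((hasDerivAt_id' s).sub_const c).mul_const (f' c)).const_add (f c) |>.add
      ((((hasDerivAt_id' s).sub_const c).fun_pow 2).const_mul (1 / 2) |>.mul_const (f'' c))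
    refine ((hf s hs).fun_sub hpoly.hasDerivWithinAt).congr_deriv ?_
    ring
  have := abs_le_pow_of_abs_deriv_le_pow 2 hc hderiv (by simp)
    (fun s hs => by simpa using abs_sub_taylor_one_le hc hf' hf'' hbound hs) ht
  norm_num at this ⊢
  linarith

theorem abs_slope_sub_deriv_le (hc : c ∈ Icc a b) {d : ℝ} (hd : d ∈ Icc a b) (hcd : c ≠ d)
    (hf : ∀ s ∈ Icc a b, HasDerivWithinAt f (f' s) (Icc a b) s)
    (hf' : ∀ s ∈ Icc a b, HasDerivWithinAt f' (f'' s) (Icc a b) s)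
    (hbound : ∀ s ∈ Icc a b, |f'' s| ≤ M) :
    |slope f c d - f' c| ≤ M / 2 * |d - c| := by
  have hne : d - c ≠ 0 := sub_ne_zero.2 hcd.symm
  have hslope : slope f c d - f' c = (f d - (f c + (d - c) * f' c)) / (d - c) := by
    rw [slope_def_field]
    field_simp
    ring
  rw [hslope, abs_div, div_le_iff₀ (abs_pos.2 hne)]
  calc |f d - (f c + (d - c) * f' c)| ≤ M / 2 * (d - c) ^ 2 :=
        abs_sub_taylor_one_le hc hf hf' hbound hd
    _ = M / 2 * |d - c| * |d - c| := by rw [← sq_abs]; ring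

theorem abs_slope_sub_deriv_endpoint_le (hab : a < b) (hc : c = a ∨ c = b)
    (hf : ∀ s ∈ Icc a b, HasDerivWithinAt f (f' s) (Icc a b) s)
    (hf' : ∀ s ∈ Icc a b, HasDerivWithinAt f' (f'' s) (Icc a b) s)
    (hbound : ∀ s ∈ Icc a b, |f'' s| ≤ M) :
    |slope f a b - f' c| ≤ M / 2 * (b - a) := by
  have ha := left_mem_Icc.2 hab.le
  have hb := right_mem_Icc.2 hab.le
  rcases hc with rfl | rfl
  · simpa [abs_of_pos (sub_pos.2 hab)] using
      abs_slope_sub_deriv_le ha hb hab.ne hf hf' hbound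
  · simpa [slope_comm f a c, abs_sub_comm a c, abs_of_pos (sub_pos.2 hab)] using
      abs_slope_sub_deriv_le hb ha hab.ne' hf hf' hbound

theorem abs_sub_taylor_two_le_of_abs_sub_le (hc : c ∈ Icc a b)
    (hf : ∀ s ∈ Icc a b, HasDerivWithinAt f (f' s) (Icc a b) s)
    (hf' : ∀ s ∈ Icc a b, HasDerivWithinAt f' (f'' s) (Icc a b) s)
    (hf'' : ∀ s ∈ Icc a b, HasDerivWithinAt f'' (f''' s) (Icc a b) s)
    (hbound : ∀ s ∈ Icc a b, |f''' s| ≤ M) {D E : ℝ} (hD : |D - f'' c| ≤ E)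
    {t : ℝ} (ht : t ∈ Icc a b) :
    |f t - (f c + (t - c) * f' c + 1 / 2 * (t - c) ^ 2 * D)| ≤
      M / 6 * |t - c| ^ 3 + 1 / 2 * (t - c) ^ 2 * E := by
  calc |f t - (f c + (t - c) * f' c + 1 / 2 * (t - c) ^ 2 * D)|
      = |(f t - (f c + (t - c) * f' c + 1 / 2 * (t - c) ^ 2 * f'' c)) -
          1 / 2 * (t - c) ^ 2 * (D - f'' c)| := by ring_nf
    _ ≤ |f t - (f c + (t - c) * f' c + 1 / 2 * (t - c) ^ 2 * f'' c)| +
          |1 / 2 * (t - c) ^ 2 * (D - f'' c)| := abs_sub _ _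
    _ ≤ M / 6 * |t - c| ^ 3 + 1 / 2 * (t - c) ^ 2 * E := by
      rw [abs_mul, abs_of_nonneg (by positivity : (0 : ℝ) ≤ 1 / 2 * (t - c) ^ 2)]
      gcongr
      exact abs_sub_taylor_two_le hc hf hf' hf'' hbound ht

end Taylor

theorem abs_sub_convex_combination_le {x y z α : ℝ} (h₀ : 0 ≤ α) (h₁ : α ≤ 1) :
    |x - ((1 - α) * y + α * z)| ≤ (1 - α) * |x - y| + α * |x - z| := by
  calc |x - ((1 - α) * y + α * z)| = |(1 - α) * (x - y) + α * (x - z)| := by ring_nf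
    _ ≤ |(1 - α) * (x - y)| + |α * (x - z)| := abs_add_le _ _
    _ = (1 - α) * |x - y| + α * |x - z| := by
      rw [abs_mul, abs_mul, abs_of_nonneg (sub_nonneg.2 h₁), abs_of_nonneg h₀]

theorem combined_time_varying_error_general
    (t₀ tₑ : ℝ) (ht : t₀ < tₑ)
    (f f' f'' f''' : ℝ → ℝ)
    (hf : ∀ t ∈ Icc t₀ tₑ, HasDerivWithinAt f (f' t) (Icc t₀ tₑ) t)
    (hf' : ∀ t ∈ Icc t₀ tₑ, HasDerivWithinAt f' (f'' t) (Icc t₀ tₑ) t)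
    (hf'' : ∀ t ∈ Icc t₀ tₑ, HasDerivWithinAt f'' (f''' t) (Icc t₀ tₑ) t)
    (M₃ : ℝ)
    (hbound : ∀ s ∈ Icc t₀ tₑ, |f''' s| ≤ M₃) :
    ∀ t ∈ Icc t₀ tₑ,
      |f t -
        ((1 - (t - t₀) / (tₑ - t₀)) *
            (f t₀ + (t - t₀) * f' t₀ +
              (1 / 2) * (t - t₀) ^ 2 * ((f' tₑ - f' t₀) / (tₑ - t₀))) +
          ((t - t₀) / (tₑ - t₀)) *
            (f tₑ + (t - tₑ) * f' tₑ +
              (1 / 2) * (t - tₑ) ^ 2 * ((f' tₑ - f' t₀) / (tₑ - t₀))))| ≤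
      M₃ * ((1 - (t - t₀) / (tₑ - t₀)) *
              ((1 / 6) * (t - t₀) ^ 3 + (1 / 2) * (t - t₀) ^ 2 * (tₑ - t₀)) +
            ((t - t₀) / (tₑ - t₀)) *
              ((1 / 6) * (tₑ - t) ^ 3 + (1 / 2) * (tₑ - t) ^ 2 * (tₑ - t₀))) := by
  intro t htI
  have hΔ : 0 < tₑ - t₀ := sub_pos.2 ht
  have hM : 0 ≤ M₃ := (abs_nonneg _).trans (hbound t₀ (left_mem_Icc.2 ht.le))
  have hα₀ : 0 ≤ (t - t₀) / (tₑ - t₀) := div_nonneg (sub_nonneg.2 htI.1) hΔ.le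
  have hα₁ : (t - t₀) / (tₑ - t₀) ≤ 1 := (div_le_one hΔ).2 (by linarith [htI.2])
  have hD : ∀ c, c = t₀ ∨ c = tₑ → |(f' tₑ - f' t₀) / (tₑ - t₀) - f'' c| ≤ M₃ * (tₑ - t₀) :=
    fun c hc => by
      rw [← slope_def_field]
      refine (abs_slope_sub_deriv_endpoint_le ht hc hf' hf'' hbound).trans ?_
      linarith [mul_nonneg hM hΔ.le]
  have e₀ := abs_sub_taylor_two_le_of_abs_sub_le (left_mem_Icc.2 ht.le) hf hf' hf'' hbound
    (hD t₀ (Or.inl rfl)) htI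
  have eₑ := abs_sub_taylor_two_le_of_abs_sub_le (right_mem_Icc.2 ht.le) hf hf' hf'' hbound
    (hD tₑ (Or.inr rfl)) htI
  rw [abs_of_nonneg (sub_nonneg.2 htI.1)] at e₀
  rw [abs_sub_comm t tₑ, abs_of_nonneg (sub_nonneg.2 htI.2)] at eₑ
  refine (abs_sub_convex_combination_le hα₀ hα₁).trans ?_
  calc _ ≤ (1 - (t - t₀) / (tₑ - t₀)) *
          (M₃ / 6 * (t - t₀) ^ 3 + 1 / 2 * (t - t₀) ^ 2 * (M₃ * (tₑ - t₀))) +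
        (t - t₀) / (tₑ - t₀) *
          (M₃ / 6 * (tₑ - t) ^ 3 + 1 / 2 * (t - tₑ) ^ 2 * (M₃ * (tₑ - t₀))) := by
        gcongr
    _ = _ := by ring

/-- Error bound for the paper's combined time-varying nodal voltage function (62):
the convex combination of the beginning-point and ending-point quadratic Taylor
expansions with the exact second derivative replaced by the numerical
differentiation `D = (f'(tₑ) − f'(t₀))/Δ`, `Δ = tₑ − t₀`.  With weight
`α(t) = (t − t₀)/Δ` and `x̂(t) = (1 − α(t))·g₀(t) + α(t)·gₑ(t)`, for every
`t ∈ [t₀, tₑ]`,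
`|f(t) − x̂(t)| ≤ M₃·[(1−α(t))·((1/6)(t−t₀)³ + (1/2)(t−t₀)²Δ)
                    + α(t)·((1/6)(tₑ−t)³ + (1/2)(tₑ−t)²Δ)]`. -/
theorem combined_time_varying_error
    (t₀ tₑ : ℝ) (ht : t₀ < tₑ)
    (f f' f'' f''' : ℝ → ℝ)
    (hf : ∀ t ∈ Icc t₀ tₑ, HasDerivWithinAt f (f' t) (Icc t₀ tₑ) t)
    (hf' : ∀ t ∈ Icc t₀ tₑ, HasDerivWithinAt f' (f'' t) (Icc t₀ tₑ) t)
    (hf'' : ∀ t ∈ Icc t₀ tₑ, HasDerivWithinAt f'' (f''' t) (Icc t₀ tₑ) t)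
    (hf'''c : ContinuousOn f''' (Icc t₀ tₑ))
    (M₃ : ℝ) (hM₃ : 0 ≤ M₃)
    (hbound : ∀ s ∈ Icc t₀ tₑ, |f''' s| ≤ M₃) :
    ∀ t ∈ Icc t₀ tₑ,
      |f t -
        ((1 - (t - t₀) / (tₑ - t₀)) *
            (f t₀ + (t - t₀) * f' t₀ +
              (1 / 2) * (t - t₀) ^ 2 * ((f' tₑ - f' t₀) / (tₑ - t₀))) +
          ((t - t₀) / (tₑ - t₀)) *
            (f tₑ + (t - tₑ) * f' tₑ +
              (1 / 2) * (t - tₑ) ^ 2 * ((f' tₑ - f' t₀) / (tₑ - t₀))))| ≤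
      M₃ * ((1 - (t - t₀) / (tₑ - t₀)) *
              ((1 / 6) * (t - t₀) ^ 3 + (1 / 2) * (t - t₀) ^ 2 * (tₑ - t₀)) +
            ((t - t₀) / (tₑ - t₀)) *
              ((1 / 6) * (tₑ - t) ^ 3 + (1 / 2) * (tₑ - t) ^ 2 * (tₑ - t₀))) :=
  combined_time_varying_error_general t₀ tₑ ht f f' f'' f''' hf hf' hf'' M₃ hbound
end
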